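/- arXiv:2301.06954 — 5 statements merged into one kernel-verified Lean document; each statement's English description precedes it below -/
import Mathlib

section
/- There is no rational solution (x, y, z) to the equation 2x² + 3y² + 3z² = 1. -/
/-!
Clearing denominators gives integers with `2p² + 3q² + 3r² = s²` and `s ≠ 0`. Reducing modulo 3
forces `3 ∣ p` and `3 ∣ s`; dividing by 3 then gives `q² + r² ≡ 0 (mod 3)`, so `3 ∣ q` and
`3 ∣ r` as well (`-1` is not a square mod 3). Hence `(p/3, q/3, r/3, s/3)` is again a solution,
and infinite descent on `|s|` forces `s = 0`.
-/

lemma eq_zero_of_two_mul_sq_eq_sq_zmod_three : ∀ a b : ZMod 3, 2 * a ^ 2 = b ^ 2 → a = 0 ∧ b = 0 := by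
  decide

lemma eq_zero_of_sq_add_sq_eq_zero_zmod_three : ∀ a b : ZMod 3, a ^ 2 + b ^ 2 = 0 → a = 0 ∧ b = 0 := by
  decide

lemma exists_eq_three_mul_of_two_mul_sq_add_three_mul_sq_add_three_mul_sq_eq_sq {p q r s : ℤ}
    (h : 2 * p ^ 2 + 3 * q ^ 2 + 3 * r ^ 2 = s ^ 2) :
    ∃ p' q' r' s' : ℤ, 2 * p' ^ 2 + 3 * q' ^ 2 + 3 * r' ^ 2 = s' ^ 2 ∧ s = 3 * s' := by
  have three_eq_zero : (3 : ZMod 3) = 0 := rfl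
  have hps : 2 * (p : ZMod 3) ^ 2 = (s : ZMod 3) ^ 2 := by
    have := congrArg (Int.cast : ℤ → ZMod 3) h
    push_cast at this
    linear_combination this - ((q : ZMod 3) ^ 2 + (r : ZMod 3) ^ 2) * three_eq_zero
  obtain ⟨hp, hs⟩ := eq_zero_of_two_mul_sq_eq_sq_zmod_three _ _ hps
  obtain ⟨p', rfl⟩ : 3 ∣ p := (ZMod.intCast_zmod_eq_zero_iff_dvd _ 3).mp hp
  obtain ⟨s', rfl⟩ : 3 ∣ s := (ZMod.intCast_zmod_eq_zero_iff_dvd _ 3).mp hs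
  have hqr_int : q ^ 2 + r ^ 2 = 3 * (s' ^ 2 - 2 * p' ^ 2) := by linarith
  have hqr : (q : ZMod 3) ^ 2 + (r : ZMod 3) ^ 2 = 0 := by
    have := congrArg (Int.cast : ℤ → ZMod 3) hqr_int
    push_cast at this
    linear_combination this + ((s' : ZMod 3) ^ 2 - 2 * (p' : ZMod 3) ^ 2) * three_eq_zero
  obtain ⟨hq, hr⟩ := eq_zero_of_sq_add_sq_eq_zero_zmod_three _ _ hqr
  obtain ⟨q', rfl⟩ : 3 ∣ q := (ZMod.intCast_zmod_eq_zero_iff_dvd _ 3).mp hq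
  obtain ⟨r', rfl⟩ : 3 ∣ r := (ZMod.intCast_zmod_eq_zero_iff_dvd _ 3).mp hr
  exact ⟨p', q', r', s', by linarith, rfl⟩

lemma eq_zero_of_two_mul_sq_add_three_mul_sq_add_three_mul_sq_eq_sq {p q r s : ℤ}
    (h : 2 * p ^ 2 + 3 * q ^ 2 + 3 * r ^ 2 = s ^ 2) : s = 0 := by
  induction hn : s.natAbs using Nat.strong_induction_on generalizing p q r s with
  | _ n ih =>
  obtain ⟨p', q', r', s', h', rfl⟩ :=
    exists_eq_three_mul_of_two_mul_sq_add_three_mul_sq_add_three_mul_sq_eq_sq h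
  rcases eq_or_ne s' 0 with rfl | hs'
  · rfl
  · exact absurd (ih s'.natAbs (by omega) h' rfl) hs'

lemma Rat.exists_common_denominator (x y z : ℚ) :
    ∃ d : ℕ, 0 < d ∧ ∃ p q r : ℤ, x * d = p ∧ y * d = q ∧ z * d = r := by
  refine ⟨x.den * y.den * z.den, by positivity, x.num * y.den * z.den, y.num * x.den * z.den,
    z.num * x.den * y.den, ?_, ?_, ?_⟩ <;>
  · push_cast
    rw [← Rat.mul_den_eq_num]
    ring

/-- There is no rational solution `(x, y, z)` to `2x² + 3y² + 3z² = 1`. -/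
theorem stmt_0 : ¬ ∃ x y z : ℚ, 2 * x ^ 2 + 3 * y ^ 2 + 3 * z ^ 2 = 1 := by
  rintro ⟨x, y, z, h⟩
  obtain ⟨d, hd, p, q, r, hp, hq, hr⟩ := Rat.exists_common_denominator x y z
  have hint : 2 * p ^ 2 + 3 * q ^ 2 + 3 * r ^ 2 = (d : ℤ) ^ 2 := by
    have : 2 * (p : ℚ) ^ 2 + 3 * (q : ℚ) ^ 2 + 3 * (r : ℚ) ^ 2 = (d : ℚ) ^ 2 := by
      rw [← hp, ← hq, ← hr]
      linear_combination (d : ℚ) ^ 2 * h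
    exact_mod_cast this
  have := eq_zero_of_two_mul_sq_add_three_mul_sq_add_three_mul_sq_eq_sq hint
  omega
end

section
/- A positive definite rational quadratic form q on ℚⁿ admits a clique of size n+1 in G(ℚⁿ, q) if and only if q is rationally equivalent to Sₙ(x) = Σ_{1≤i≤j≤n} xᵢxⱼ. -/
/-- The unit-distance graph of a rational quadratic form `q` on `ℚⁿ`:
vertices are `ℚⁿ` and `x ~ y` iff `q (x - y) = 1`. -/
def distGraph {n : ℕ} (q : QuadraticForm ℚ (Fin n → ℚ)) : SimpleGraph (Fin n → ℚ) where
  Adj x y := q (x - y) = 1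
  symm := ⟨fun x y h => by change q (x - y) = 1 at h; change q (y - x) = 1; rwa [QuadraticMap.map_sub] at h⟩
  loopless := ⟨fun x h => by change q (x - x) = 1 at h; simp [sub_self] at h⟩

/-- The quadratic form `Sₙ(x) = ∑_{1 ≤ i ≤ j ≤ n} xᵢ xⱼ` as a function. -/
def Sfun (n : ℕ) (x : Fin n → ℚ) : ℚ := ∑ i, ∑ j ∈ Finset.Ici i, x i * x j

/-! If `v₀, …, vₙ` is a clique, the vectors `wᵢ = vᵢ - v₀` satisfy `q wᵢ = 1` and
`q (wᵢ - wⱼ) = 1`, so the matrix `polar q wᵢ wⱼ` is `I + J`, as is the polar matrix of `Sₙ` in the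
standard basis. Hence `q (∑ cᵢ wᵢ) = Sₙ c`; since `2 Sₙ c = (∑ cᵢ)² + ∑ cᵢ²`, `Sₙ` is anisotropic
and the `wᵢ` form a basis, and the coordinate map is the required `T`. Conversely `T⁻¹` carries the clique
`0, e₁, …, eₙ` of `Sₙ` to a clique of `q`. -/

lemma SimpleGraph.exists_isNClique_iff_exists_pairwise_adj {V : Type*} (G : SimpleGraph V)
    (k : ℕ) :
    (∃ s : Finset V, G.IsNClique k s) ↔ ∃ v : Fin k → V, Pairwise fun i j => G.Adj (v i) (v j) := by
  classical
  constructor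
  · rintro ⟨s, hs⟩
    let e := (s.equivFinOfCardEq hs.card_eq).symm
    exact ⟨fun i => e i, fun i j hij =>
      hs.isClique (e i).2 (e j).2 (Subtype.coe_injective.ne (e.injective.ne hij))⟩
  · rintro ⟨v, hv⟩
    have hinj : Function.Injective v := fun i j hij =>
      by_contra fun hne => by simpa [hij] using hv hne
    refine ⟨Finset.univ.image v, ?_, by simp [Finset.card_image_of_injective _ hinj]⟩
    simp only [Finset.coe_image, Finset.coe_univ, Set.image_univ]
    rintro _ ⟨i, rfl⟩ _ ⟨j, rfl⟩ hne
    exact hv (ne_of_apply_ne v hne)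

namespace QuadraticMap

variable {R M : Type*} [CommRing R] [AddCommGroup M] [Module R M]

lemma polar_eq_one_of_map_eq_one (q : QuadraticMap R M R) {x y : M} (hx : q x = 1)
    (hy : q y = 1) (hxy : q (x - y) = 1) : polar q x y = 1 := by
  have h := polar_neg_right q x y
  rw [polar, QuadraticMap.map_neg, ← sub_eq_add_neg, hx, hy, hxy] at h
  linear_combination h

/-- The points `0` and `w i` are pairwise at `q`-distance `1`. -/
def IsUnitSimplex {ι : Type*} (q : QuadraticMap R M R) (w : ι → M) : Prop :=
  (∀ i, q (w i) = 1) ∧ Pairwise fun i j => q (w i - w j) = 1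

lemma exists_pairwise_map_sub_eq_one_iff (q : QuadraticMap R M R) (k : ℕ) :
    (∃ v : Fin (k + 1) → M, Pairwise fun i j => q (v i - v j) = 1) ↔
      ∃ w : Fin k → M, IsUnitSimplex q w := by
  constructor
  · rintro ⟨v, hv⟩
    refine ⟨fun i => v i.succ - v 0, fun i => hv (Fin.succ_ne_zero i), fun i j hij => ?_⟩
    simpa using hv ((Fin.succ_injective _).ne hij)
  · rintro ⟨w, hw₀, hw⟩
    refine ⟨Fin.cons 0 w, fun i j hij => ?_⟩
    cases i using Fin.cases <;> cases j using Fin.cases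
    · exact absurd rfl hij
    · simpa using hw₀ _
    · simpa using hw₀ _
    · simpa using hw (fun h => hij (congrArg Fin.succ h))

end QuadraticMap

lemma two_mul_Sfun {n : ℕ} (x : Fin n → ℚ) :
    2 * Sfun n x = (∑ i, x i) ^ 2 + ∑ i, x i ^ 2 := by
  have hswap : ∑ i, ∑ j ∈ Finset.Iio i, x i * x j = ∑ i, ∑ j ∈ Finset.Ioi i, x i * x j := by
    rw [Finset.sum_comm' (s' := fun j => Finset.Ioi j) (t' := Finset.univ) (by simp)]
    simp_rw [mul_comm]
  have hrow (i : Fin n) :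
      ∑ j, x i * x j = ∑ j ∈ Finset.Iio i, x i * x j + ∑ j ∈ Finset.Ici i, x i * x j := by
    rw [← Finset.sum_union (Finset.disjoint_left.2 fun j hj hj' =>
      (Finset.mem_Iio.1 hj).not_ge (Finset.mem_Ici.1 hj'))]
    congr 1
    ext j
    simp [lt_or_ge]
  have hdiag (i : Fin n) :
      ∑ j ∈ Finset.Ici i, x i * x j = x i ^ 2 + ∑ j ∈ Finset.Ioi i, x i * x j := by
    rw [← Finset.Ioi_insert, Finset.sum_insert (by simp), sq]
  rw [sq (∑ i, x i), Finset.sum_mul_sum, Sfun]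
  simp only [hrow, hdiag, Finset.sum_add_distrib, hswap]
  ring

lemma eq_zero_of_Sfun_eq_zero {n : ℕ} {x : Fin n → ℚ} (h : Sfun n x = 0) : x = 0 := by
  have hsq : ∑ i, x i ^ 2 = 0 := by
    nlinarith [two_mul_Sfun x, sq_nonneg (∑ i, x i),
      Finset.sum_nonneg fun i (_ : i ∈ Finset.univ) => sq_nonneg (x i)]
  funext i
  exact pow_eq_zero_iff two_ne_zero |>.1 <|
    (Finset.sum_eq_zero_iff_of_nonneg fun j _ => sq_nonneg (x j)).1 hsq i (Finset.mem_univ i)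

lemma Sfun_single {n : ℕ} (i : Fin n) : Sfun n (Pi.single i 1) = 1 := by
  have := two_mul_Sfun (Pi.single i (1 : ℚ))
  simp [Pi.single_apply] at this
  linarith

lemma Sfun_single_sub_single {n : ℕ} {i j : Fin n} (hij : i ≠ j) :
    Sfun n (Pi.single i 1 - Pi.single j 1) = 1 := by
  have := two_mul_Sfun (Pi.single i (1 : ℚ) - Pi.single j 1)
  simp [Pi.single_apply, sub_sq, Finset.sum_add_distrib, Finset.sum_sub_distrib, hij.symm] at this
  linarith

namespace QuadraticMap.IsUnitSimplex

section CommRing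

variable {R M ι : Type*} [CommRing R] [AddCommGroup M] [Module R M] [DecidableEq ι]
  {q : QuadraticMap R M R} {w : ι → M}

lemma polar_eq (hw : IsUnitSimplex q w) (i j : ι) :
    polar q (w i) (w j) = if i = j then 2 else 1 := by
  split_ifs with hij
  · rw [hij, polar_self, hw.1, two_nsmul, one_add_one_eq_two]
  · exact polar_eq_one_of_map_eq_one q (hw.1 i) (hw.1 j) (hw.2 hij)

end CommRing

variable {M : Type*} [AddCommGroup M] [Module ℚ M] {q : QuadraticForm ℚ M} {n : ℕ}
  {w : Fin n → M}

lemma map_sum_smul (hw : IsUnitSimplex q w) (c : Fin n → ℚ) :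
    q (∑ i, c i • w i) = Sfun n c := by
  have hpolar : polar q (∑ i, c i • w i) (∑ j, c j • w j) =
      ∑ i, ∑ j, c i * c j * polar q (w i) (w j) := by
    simp only [← polarBilin_apply_apply, map_sum, map_smul, LinearMap.sum_apply,
      LinearMap.smul_apply, smul_eq_mul, Finset.mul_sum]
    exact Finset.sum_comm.trans <|
      Finset.sum_congr rfl fun i _ => Finset.sum_congr rfl fun j _ => by ring
  have hgram : ∑ i, ∑ j, c i * c j * polar q (w i) (w j) = (∑ i, c i) ^ 2 + ∑ i, c i ^ 2 := by
    have hentry (i j : Fin n) :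
        c i * c j * polar q (w i) (w j) = c i * c j + if i = j then c i ^ 2 else 0 := by
      rw [hw.polar_eq]
      split_ifs with hij
      · rw [hij]; ring
      · ring
    simp only [hentry, Finset.sum_add_distrib, Finset.sum_ite_eq, Finset.mem_univ, if_true]
    rw [pow_two, Finset.sum_mul_sum]
  rw [polar_self, hgram, ← two_mul_Sfun, two_nsmul] at hpolar
  linarith

lemma linearIndependent (hw : IsUnitSimplex q w) : LinearIndependent ℚ w :=
  Fintype.linearIndependent_iff.2 fun c hc => by
    have : Sfun n c = 0 := by rw [← hw.map_sum_smul, hc, map_zero]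
    simp [eq_zero_of_Sfun_eq_zero this]

end QuadraticMap.IsUnitSimplex

theorem stmt_8_general {n : ℕ} (q : QuadraticForm ℚ (Fin n → ℚ)) :
    (∃ s : Finset (Fin n → ℚ), (distGraph q).IsNClique (n + 1) s) ↔
      ∃ T : (Fin n → ℚ) ≃ₗ[ℚ] (Fin n → ℚ), ∀ x, q x = Sfun n (T x) := by
  rw [SimpleGraph.exists_isNClique_iff_exists_pairwise_adj]
  refine (QuadraticMap.exists_pairwise_map_sub_eq_one_iff q n).trans ⟨?_, ?_⟩
  · rintro ⟨w, hw⟩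
    let b := basisOfLinearIndependentOfCardEqFinrank' w hw.linearIndependent (by simp)
    refine ⟨b.equivFun, fun x => ?_⟩
    conv_lhs => rw [← b.sum_equivFun x]
    simpa [b] using hw.map_sum_smul (b.equivFun x)
  · rintro ⟨T, hT⟩
    refine ⟨fun i => T.symm (Pi.single i 1), fun i => ?_, fun i j hij => ?_⟩
    · rw [hT, T.apply_symm_apply, Sfun_single]
    · dsimp only
      rw [← map_sub, hT, T.apply_symm_apply, Sfun_single_sub_single hij]

/-- A positive definite rational quadratic form `q` on `ℚⁿ` admits a clique of size
`n + 1` in `G(ℚⁿ, q)` iff `q` is rationally equivalent to `Sₙ`. -/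
theorem stmt_8 {n : ℕ} (q : QuadraticForm ℚ (Fin n → ℚ)) (hq : q.PosDef) :
    (∃ s : Finset (Fin n → ℚ), (distGraph q).IsNClique (n + 1) s) ↔
      ∃ T : (Fin n → ℚ) ≃ₗ[ℚ] (Fin n → ℚ), ∀ x, q x = Sfun n (T x) :=
  stmt_8_general q
end

section
/- For every n ≥ 2, there exist n+1 points in ℚⁿ such that the Euclidean distance between every pair is a rational number, and the points are affinely independent (i.e., form a nondegenerate simplex with rational side lengths). -/
/-!
Induction on the dimension, keeping the simplex inscribed in a sphere with centre `c` and squared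
radius `r`. Put the base in the hyperplane `x₀ = 0` and add the apex `(h, c)`, where `h ≠ 0` makes
`r + h²` a square (e.g. `h = (r - 1) / 2`): the apex is then at rational distance from every old
vertex, and the new circumcentre `(t, c)` with `t = (h² - r) / (2h)` is again rational.
-/

theorem AffineIndependent.fin_cons {k V P : Type*} [Field k] [AddCommGroup V] [Module k V]
    [AddTorsor V P] {m : ℕ} {p : Fin m → P} (hp : AffineIndependent k p) {q : P}
    (hq : q ∉ affineSpan k (Set.range p)) :
    AffineIndependent k (Fin.cons q p : Fin (m + 1) → P) := by
  refine AffineIndependent.affineIndependent_of_notMem_span (i := 0) ?_ ?_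
  · rw [← affineIndependent_equiv (finSuccAboveEquiv 0)]
    simpa [Function.comp_def, finSuccAboveEquiv_apply] using hp
  · have hrange : (Fin.cons q p : Fin (m + 1) → P) '' {x | x ≠ 0} = Set.range p := by
      ext x
      simp [Fin.exists_fin_succ]
    simpa [hrange] using hq

theorem affineIndependent_cons_cons_zero {k : Type*} [Field k] {m n : ℕ}
    {p : Fin m → Fin n → k} (hp : AffineIndependent k p) (c : Fin n → k) {h : k} (hh : h ≠ 0) :
    AffineIndependent k
      (Fin.cons (Fin.cons h c) fun i => Fin.cons 0 (p i) : Fin (m + 1) → Fin (n + 1) → k) := by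
  refine AffineIndependent.fin_cons ?_ ?_
  · refine AffineIndependent.of_comp (LinearMap.funLeft k k Fin.succ).toAffineMap ?_
    simpa [Function.comp_def, LinearMap.funLeft] using hp
  · have hspan : affineSpan k (Set.range fun i => (Fin.cons 0 (p i) : Fin (n + 1) → k)) ≤
        (LinearMap.ker (LinearMap.proj (R := k) (φ := fun _ => k) 0)).toAffineSubspace := by
      rw [affineSpan_le]
      rintro _ ⟨i, rfl⟩
      simp
    intro hmem
    simpa [hh] using hspan hmem

section SqDist

variable {R : Type*} [CommRing R] {n : ℕ}

def sqDist (x y : Fin n → R) : R := ∑ t, (x t - y t) ^ 2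

theorem sqDist_self (x : Fin n → R) : sqDist x x = 0 := by
  simp [sqDist]

theorem sqDist_comm (x y : Fin n → R) : sqDist x y = sqDist y x := by
  simp only [sqDist, ← neg_sub (x _), neg_sq]

theorem sqDist_cons (a b : R) (x y : Fin n → R) :
    sqDist (Fin.cons a x : Fin (n + 1) → R) (Fin.cons b y) = (a - b) ^ 2 + sqDist x y := by
  simp [sqDist, Fin.sum_univ_succ]

end SqDist

theorem exists_ne_zero_add_sq_eq_sq {k : Type*} [Field k] [CharZero k] (r : k) :
    ∃ h s : k, h ≠ 0 ∧ r + h ^ 2 = s ^ 2 := by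
  by_cases hr : r = 1
  · exact ⟨3 / 4, 5 / 4, by norm_num, by subst hr; ring⟩
  · refine ⟨(r - 1) / 2, (r + 1) / 2, ?_, by ring⟩
    exact div_ne_zero (sub_ne_zero.mpr hr) two_ne_zero

def IsCosphericalRationalSimplex {k : Type*} [Field k] {n : ℕ} (p : Fin (n + 1) → Fin n → k) :
    Prop :=
  AffineIndependent k p ∧ (∀ i j, IsSquare (sqDist (p i) (p j))) ∧
    ∃ c r, ∀ i, sqDist (p i) c = r

theorem exists_isCosphericalRationalSimplex {k : Type*} [Field k] [CharZero k] (n : ℕ) :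
    ∃ p : Fin (n + 1) → Fin n → k, IsCosphericalRationalSimplex p := by
  induction n with
  | zero =>
    exact ⟨0, affineIndependent_of_subsingleton (ι := Fin 1) k _, fun _ _ => ⟨0, by simp [sqDist]⟩,
      0, 0, fun _ => by simp [sqDist]⟩
  | succ n ih =>
    obtain ⟨p, hp, hsq, c, r, hr⟩ := ih
    obtain ⟨h, s, hh, hs⟩ := exists_ne_zero_add_sq_eq_sq r
    set t := (h ^ 2 - r) / (2 * h)
    have ht : 2 * h * t = h ^ 2 - r := mul_div_cancel₀ _ (mul_ne_zero two_ne_zero hh)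
    refine ⟨Fin.cons (Fin.cons h c) fun i => Fin.cons 0 (p i),
      affineIndependent_cons_cons_zero hp c hh, ?_, Fin.cons t c, r + t ^ 2, ?_⟩
    · intro i j
      refine Fin.cases (Fin.cases ?_ fun j => ?_) (fun i => Fin.cases ?_ fun j => ?_) i j <;>
        simp only [Fin.cons_zero, Fin.cons_succ, sqDist_cons, sqDist_self, sqDist_comm c, hr]
      · exact ⟨0, by ring⟩
      · exact ⟨s, by rw [← sq, ← hs]; ring⟩
      · exact ⟨s, by rw [← sq, ← hs]; ring⟩
      · simpa using hsq i j
    · intro i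
      refine Fin.cases ?_ (fun i => ?_) i <;>
        simp only [Fin.cons_zero, Fin.cons_succ, sqDist_cons, sqDist_self, hr]
      · linear_combination -ht
      · ring

theorem stmt_15_general (n : ℕ) :
    ∃ p : Fin (n + 1) → (Fin n → ℚ), AffineIndependent ℚ p ∧
      ∀ i j : Fin (n + 1), ∃ c : ℚ, ∑ t, (p i t - p j t) ^ 2 = c ^ 2 := by
  obtain ⟨p, hp, hsq, -⟩ := exists_isCosphericalRationalSimplex (k := ℚ) n
  refine ⟨p, hp, fun i j => ?_⟩
  obtain ⟨c, hc⟩ := hsq i j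
  exact ⟨c, hc.trans (sq c).symm⟩

/-- For every `n ≥ 2` there is a nondegenerate simplex in `ℚⁿ` with all pairwise
Euclidean distances rational. -/
theorem stmt_15 (n : ℕ) (hn : 2 ≤ n) :
    ∃ p : Fin (n + 1) → (Fin n → ℚ), AffineIndependent ℚ p ∧
      ∀ i j : Fin (n + 1), ∃ c : ℚ, ∑ t, (p i t - p j t) ^ 2 = c ^ 2 :=
  stmt_15_general n
end

section
/- Any graph automorphism of the connected component of 0 in the unit distance graph on ℚⁿ (x ~ y iff Σ(xᵢ−yᵢ)² = 1) fixing 0 preserves all distances, i.e., is an isometry of ℚⁿ restricted to the component (rational Beckman–Quarles theorem). -/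
/-- The unit-distance graph on `ℚⁿ`: `x ~ y` iff `∑ (xᵢ − yᵢ)² = 1`. -/
def euclGraph (n : ℕ) : SimpleGraph (Fin n → ℚ) where
  Adj x y := ∑ i, (x i - y i) ^ 2 = 1
  symm := by
    constructor
    intro x y h
    show ∑ i, (y i - x i) ^ 2 = 1
    rw [← h]
    exact Finset.sum_congr rfl fun i _ => by ring
  loopless := by constructor; intro x h; simp at h

/-- The connected component of the origin. -/
def comp0 (n : ℕ) : Set (Fin n → ℚ) := {v | (euclGraph n).Reachable 0 v}

/-!
Extend the automorphism by `0` off the component to a map `f` on `ℚⁿ`. A common neighbour of two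
points at distance `2` is their midpoint, and `f` permutes common neighbours, so `f` preserves
the midpoints of such pairs. Along two parallel progressions `x + k u` and `x + v + k u`
(`k = 0, 1, 2`; `u`, `v` unit vectors) the images of the unit gaps are then `d + k e` with
`|d + k e| = 1` for three values of `k`, which forces `e = 0`: adding a unit vector moves `f` by a
constant. Walking through the component, `f` is additive, hence `ℤ`-linear, and clearing
denominators shows that it is the matrix `G` whose rows are the images of the standard basis
vectors. These rows are unit vectors, and orthogonal because `(3 eᵢ + 4 eⱼ) / 5` is a rational
unit vector; so `G Gᵀ = 1` and `f` preserves distances.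
-/

open Matrix

section DotProduct
variable {ι K : Type*} [Fintype ι] [CommRing K] [LinearOrder K] [IsStrictOrderedRing K]

theorem eq_of_dotProduct_add_self_eq_four {p q : ι → K} (hp : p ⬝ᵥ p = 1) (hq : q ⬝ᵥ q = 1)
    (hpq : (p + q) ⬝ᵥ (p + q) = 4) : p = q := by
  have parallelogram :
      (p - q) ⬝ᵥ (p - q) = 2 * (p ⬝ᵥ p) + 2 * (q ⬝ᵥ q) - (p + q) ⬝ᵥ (p + q) := by
    simp only [add_dotProduct, dotProduct_add, sub_dotProduct, dotProduct_sub, dotProduct_comm q p]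
    ring
  rw [hp, hq, hpq] at parallelogram
  exact sub_eq_zero.mp (dotProduct_self_eq_zero.mp (by linarith))

theorem eq_zero_of_dotProduct_self_add_eq {d e : ι → K} (h₁ : (d + e) ⬝ᵥ (d + e) = d ⬝ᵥ d)
    (h₂ : (d + e + e) ⬝ᵥ (d + e + e) = d ⬝ᵥ d) : e = 0 := by
  have second_difference : (d + e + e) ⬝ᵥ (d + e + e) - 2 * (d + e) ⬝ᵥ (d + e) + d ⬝ᵥ d
      = 2 * (e ⬝ᵥ e) := by
    simp only [add_dotProduct, dotProduct_add, dotProduct_comm e d]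
    ring
  rw [h₁, h₂] at second_difference
  exact dotProduct_self_eq_zero.mp (by linarith)

end DotProduct

theorem vecMul_dotProduct_vecMul_of_mul_transpose_eq_one {ι K : Type*} [Fintype ι]
    [DecidableEq ι] [CommRing K] {G : Matrix ι ι K} (hG : G * Gᵀ = 1) (x y : ι → K) :
    (x ᵥ* G) ⬝ᵥ (y ᵥ* G) = x ⬝ᵥ y := by
  rw [← dotProduct_mulVec, ← mulVec_transpose, mulVec_mulVec, hG, one_mulVec]

variable {n : ℕ}

theorem sum_sub_sq_eq_dotProduct (x y : Fin n → ℚ) :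
    ∑ i, (x i - y i) ^ 2 = (x - y) ⬝ᵥ (x - y) := by
  simp [dotProduct, sq]

theorem euclGraph_adj_iff {x y : Fin n → ℚ} :
    (euclGraph n).Adj x y ↔ (x - y) ⬝ᵥ (x - y) = 1 := by
  rw [← sum_sub_sq_eq_dotProduct]; rfl

def euclGraphAddLeft (t : Fin n → ℚ) : euclGraph n →g euclGraph n where
  toFun x := t + x
  map_rel' {x y} h := by rwa [euclGraph_adj_iff, add_sub_add_left_eq_sub, ← euclGraph_adj_iff]

def euclGraphNeg : euclGraph n →g euclGraph n where
  toFun x := -x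
  map_rel' {x y} h := by
    rwa [euclGraph_adj_iff, neg_sub_neg, ← neg_sub, neg_dotProduct, dotProduct_neg, neg_neg,
      ← euclGraph_adj_iff]

def comp0AddSubgroup (n : ℕ) : AddSubgroup (Fin n → ℚ) where
  carrier := comp0 n
  zero_mem' := SimpleGraph.Reachable.refl 0
  add_mem' {x y} hx hy :=
    hx.trans <| by simpa [euclGraphAddLeft] using hy.map (euclGraphAddLeft x)
  neg_mem' {x} hx := by simpa [comp0, euclGraphNeg] using hx.map euclGraphNeg

theorem mem_comp0_of_adj {x y : Fin n → ℚ} (hx : x ∈ comp0 n) (h : (euclGraph n).Adj x y) :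
    y ∈ comp0 n :=
  SimpleGraph.Reachable.trans hx h.reachable

theorem mem_comp0_of_dotProduct_self_eq_one {u : Fin n → ℚ} (hu : u ⬝ᵥ u = 1) : u ∈ comp0 n :=
  mem_comp0_of_adj (comp0AddSubgroup n).zero_mem <| by
    rwa [euclGraph_adj_iff, zero_sub, neg_dotProduct, dotProduct_neg, neg_neg]

theorem comp0_induction {P : (x : Fin n → ℚ) → x ∈ comp0 n → Prop}
    (zero : P 0 (comp0AddSubgroup n).zero_mem)
    (step : ∀ x y (hx : x ∈ comp0 n) (hxy : (euclGraph n).Adj x y), P x hx →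
      P y (mem_comp0_of_adj hx hxy))
    {x : Fin n → ℚ} (hx : x ∈ comp0 n) : P x hx := by
  induction (SimpleGraph.reachable_iff_reflTransGen 0 x).mp hx with
  | refl => exact zero
  | tail hreach hadj ih =>
    exact step _ _ _ hadj (ih ((SimpleGraph.reachable_iff_reflTransGen _ _).mpr hreach))

theorem euclGraph_adj_add_self {x u : Fin n → ℚ} (hu : u ⬝ᵥ u = 1) :
    (euclGraph n).Adj (x + u) x := by
  rwa [euclGraph_adj_iff, add_sub_cancel_left]

theorem add_mem_comp0 {x u : Fin n → ℚ} (hx : x ∈ comp0 n) (hu : u ⬝ᵥ u = 1) :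
    x + u ∈ comp0 n :=
  mem_comp0_of_adj hx (euclGraph_adj_add_self hu).symm

theorem sub_eq_sub_of_adj_of_adj {x y w : Fin n → ℚ} (hxy : (euclGraph n).Adj x y)
    (hyw : (euclGraph n).Adj y w) (hxw : (x - w) ⬝ᵥ (x - w) = 4) : x - y = y - w :=
  eq_of_dotProduct_add_self_eq_four (euclGraph_adj_iff.mp hxy) (euclGraph_adj_iff.mp hyw)
    (by rwa [sub_add_sub_cancel])

section Automorphism

variable (φ : (euclGraph n).induce (comp0 n) ≃g (euclGraph n).induce (comp0 n))

/-- `φ` extended by `0` off the component, so that it can be evaluated at sums without carrying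
membership proofs. -/
noncomputable def autExt (x : Fin n → ℚ) : Fin n → ℚ :=
  open Classical in if h : x ∈ comp0 n then (φ ⟨x, h⟩).1 else 0

noncomputable def autMatrix : Matrix (Fin n) (Fin n) ℚ :=
  Matrix.of fun i => autExt φ (Pi.single i 1)

variable {φ}

theorem autExt_of_mem {x : Fin n → ℚ} (hx : x ∈ comp0 n) : autExt φ x = (φ ⟨x, hx⟩).1 :=
  dif_pos hx

theorem autExt_coe (a : comp0 n) : autExt φ a = (φ a).1 :=
  autExt_of_mem a.2

theorem autExt_mem {x : Fin n → ℚ} (hx : x ∈ comp0 n) : autExt φ x ∈ comp0 n := by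
  rw [autExt_of_mem hx]
  exact (φ _).2

theorem autExt_adj_iff {x y : Fin n → ℚ} (hx : x ∈ comp0 n) (hy : y ∈ comp0 n) :
    (euclGraph n).Adj (autExt φ x) (autExt φ y) ↔ (euclGraph n).Adj x y := by
  rw [autExt_of_mem hx, autExt_of_mem hy]
  exact φ.map_adj_iff

theorem exists_autExt_eq {z : Fin n → ℚ} (hz : z ∈ comp0 n) :
    ∃ y ∈ comp0 n, autExt φ y = z := by
  obtain ⟨y, hy⟩ := φ.surjective ⟨z, hz⟩
  exact ⟨y, y.2, by rw [autExt_coe, hy]⟩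

theorem autExt_sub_eq_sub {x y w : Fin n → ℚ} (hx : x ∈ comp0 n) (hxy : (euclGraph n).Adj x y)
    (hyw : (euclGraph n).Adj y w) (hxw : (x - w) ⬝ᵥ (x - w) = 4) :
    autExt φ x - autExt φ y = autExt φ y - autExt φ w := by
  have hy := mem_comp0_of_adj hx hxy
  have hw := mem_comp0_of_adj hy hyw
  set y' := autExt φ x + autExt φ w - autExt φ y with hy'
  have hxy' : (euclGraph n).Adj (autExt φ x) y' := by
    rw [euclGraph_adj_iff, show autExt φ x - y' = autExt φ y - autExt φ w by rw [hy']; abel,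
      ← euclGraph_adj_iff, autExt_adj_iff hy hw]
    exact hyw
  have hy'w : (euclGraph n).Adj y' (autExt φ w) := by
    rw [euclGraph_adj_iff, show y' - autExt φ w = autExt φ x - autExt φ y by rw [hy']; abel,
      ← euclGraph_adj_iff, autExt_adj_iff hx hy]
    exact hxy
  obtain ⟨z, hz, hzy'⟩ := exists_autExt_eq (mem_comp0_of_adj (autExt_mem hx) hxy')
  rw [← hzy', autExt_adj_iff hx hz] at hxy'
  rw [← hzy', autExt_adj_iff hz hw] at hy'w
  have hzy : z = y := by
    have h₁ := sub_eq_sub_of_adj_of_adj hxy hyw hxw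
    have h₂ := sub_eq_sub_of_adj_of_adj hxy' hy'w hxw
    funext i
    have := congrFun h₁ i
    have := congrFun h₂ i
    simp only [Pi.sub_apply] at *
    linarith
  rw [hzy, eq_sub_iff_add_eq] at hzy'
  rw [sub_eq_sub_iff_add_eq_add, hzy']

theorem autExt_add_add_sub {x u : Fin n → ℚ} (hx : x ∈ comp0 n) (hu : u ⬝ᵥ u = 1) :
    autExt φ (x + u + u) - autExt φ (x + u) = autExt φ (x + u) - autExt φ x := by
  refine autExt_sub_eq_sub ?_ (euclGraph_adj_add_self hu) (euclGraph_adj_add_self hu) ?_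
  · exact add_mem_comp0 (add_mem_comp0 hx hu) hu
  · rw [add_assoc, add_sub_cancel_left, add_dotProduct, dotProduct_add, hu]
    norm_num

theorem autExt_add_add_sub_comm {x u v : Fin n → ℚ} (hx : x ∈ comp0 n) (hu : u ⬝ᵥ u = 1)
    (hv : v ⬝ᵥ v = 1) :
    autExt φ (x + v + u) - autExt φ (x + v) = autExt φ (x + u) - autExt φ x := by
  have hxv := add_mem_comp0 hx hv
  have hA := autExt_add_add_sub (φ := φ) hx hu
  have hB := autExt_add_add_sub (φ := φ) hxv hu
  have unit_gap : ∀ y ∈ comp0 n,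
      (autExt φ (y + v) - autExt φ y) ⬝ᵥ (autExt φ (y + v) - autExt φ y) = 1 := fun y hy =>
    euclGraph_adj_iff.mp <|
      (autExt_adj_iff (add_mem_comp0 hy hv) hy).mpr (euclGraph_adj_add_self hv)
  have hxu := add_mem_comp0 hx hu
  have hxuu := add_mem_comp0 hxu hu
  rw [sub_eq_iff_eq_add] at hA hB
  rw [← sub_eq_zero]
  refine eq_zero_of_dotProduct_self_add_eq (d := autExt φ (x + v) - autExt φ x) ?_ ?_
  · rw [unit_gap x hx, ← unit_gap (x + u) hxu, add_right_comm x u v]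
    congr 1 <;> abel
  · rw [unit_gap x hx, ← unit_gap (x + u + u) hxuu, add_right_comm (x + u) u v,
      add_right_comm x u v, hA, hB]
    congr 1 <;> abel

theorem autExt_add_of_dotProduct_self_eq_one (hφ0 : autExt φ 0 = 0) {u : Fin n → ℚ}
    (hu : u ⬝ᵥ u = 1) {x : Fin n → ℚ} (hx : x ∈ comp0 n) :
    autExt φ (x + u) = autExt φ x + autExt φ u := by
  induction hx using comp0_induction with
  | zero => rw [zero_add, hφ0, zero_add]
  | step x y hx hxy ih =>
    obtain ⟨v, hv, rfl⟩ : ∃ v, v ⬝ᵥ v = 1 ∧ y = x + v :=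
      ⟨y - x, euclGraph_adj_iff.mp hxy.symm, (add_sub_cancel x y).symm⟩
    rw [← sub_eq_iff_eq_add', autExt_add_add_sub_comm hx hu hv, ih, add_sub_cancel_left]

theorem autExt_add (hφ0 : autExt φ 0 = 0) {x y : Fin n → ℚ} (hx : x ∈ comp0 n)
    (hy : y ∈ comp0 n) : autExt φ (x + y) = autExt φ x + autExt φ y := by
  induction hy using comp0_induction with
  | zero => rw [add_zero, hφ0, add_zero]
  | step y z hy hyz ih =>
    obtain ⟨v, hv, rfl⟩ : ∃ v, v ⬝ᵥ v = 1 ∧ z = y + v :=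
      ⟨z - y, euclGraph_adj_iff.mp hyz.symm, (add_sub_cancel y z).symm⟩
    rw [← add_assoc, autExt_add_of_dotProduct_self_eq_one hφ0 hv
        ((comp0AddSubgroup n).add_mem hx hy), ih,
      autExt_add_of_dotProduct_self_eq_one hφ0 hv hy, add_assoc]

noncomputable def autExtHom (hφ0 : autExt φ 0 = 0) : comp0AddSubgroup n →+ (Fin n → ℚ) :=
  AddMonoidHom.mk' (fun x => autExt φ x) fun x y => autExt_add hφ0 x.2 y.2

theorem autExt_intCast_eq_vecMul (hφ0 : autExt φ 0 = 0) (z : Fin n → ℤ) :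
    autExt φ (fun i => (z i : ℚ)) = (fun i => (z i : ℚ)) ᵥ* autMatrix φ := by
  let e : Fin n → comp0AddSubgroup n := fun i =>
    ⟨Pi.single i 1, mem_comp0_of_dotProduct_self_eq_one (by simp)⟩
  have hz : (fun i => (z i : ℚ)) = ((∑ i, z i • e i : comp0AddSubgroup n) : Fin n → ℚ) := by
    ext j
    simp [e, Pi.single_apply]
  calc autExt φ (fun i => (z i : ℚ)) = autExtHom hφ0 (∑ i, z i • e i) := by rw [hz]; rfl
    _ = ∑ i, z i • autExtHom hφ0 (e i) := by simp only [map_sum, map_zsmul]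
    _ = (fun i => (z i : ℚ)) ᵥ* autMatrix φ := by
      rw [vecMul_eq_sum]
      exact Finset.sum_congr rfl fun i _ => (Int.cast_smul_eq_zsmul ℚ (z i) _).symm

theorem autExt_eq_vecMul (hφ0 : autExt φ 0 = 0) {w : Fin n → ℚ} (hw : w ∈ comp0 n) :
    autExt φ w = w ᵥ* autMatrix φ := by
  obtain ⟨⟨b, hb⟩, hint⟩ := IsLocalization.exist_integer_multiples_of_finite (nonZeroDivisors ℤ) w
  choose z hz using hint
  have hbw : (fun i => (z i : ℚ)) = (b : ℚ) • w := funext fun i => by simpa using hz i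
  have hb0 : (b : ℚ) ≠ 0 := by exact_mod_cast nonZeroDivisors.ne_zero hb
  apply smul_right_injective _ hb0
  calc (b : ℚ) • autExt φ w = autExt φ ((b : ℚ) • w) := by
        rw [Int.cast_smul_eq_zsmul, Int.cast_smul_eq_zsmul]
        exact (map_zsmul (autExtHom hφ0) b ⟨w, hw⟩).symm
    _ = ((b : ℚ) • w) ᵥ* autMatrix φ := by rw [← hbw]; exact autExt_intCast_eq_vecMul hφ0 z
    _ = (b : ℚ) • (w ᵥ* autMatrix φ) := smul_vecMul _ _ _

theorem autExt_dotProduct_self (hφ0 : autExt φ 0 = 0) {u : Fin n → ℚ} (hu : u ⬝ᵥ u = 1) :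
    autExt φ u ⬝ᵥ autExt φ u = 1 := by
  have hadj : (euclGraph n).Adj u 0 := by rwa [euclGraph_adj_iff, sub_zero]
  have := (autExt_adj_iff (φ := φ) (mem_comp0_of_dotProduct_self_eq_one hu)
    (comp0AddSubgroup n).zero_mem).mpr hadj
  rwa [hφ0, euclGraph_adj_iff, sub_zero] at this

theorem autMatrix_row_dotProduct_of_ne (hφ0 : autExt φ 0 = 0) {i j : Fin n} (hij : i ≠ j) :
    autMatrix φ i ⬝ᵥ autMatrix φ j = 0 := by
  have hrow (k : Fin n) : autMatrix φ k ⬝ᵥ autMatrix φ k = 1 :=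
    autExt_dotProduct_self hφ0 (by simp)
  set s : Fin n → ℚ := Pi.single i (3 / 5) + Pi.single j (4 / 5)
  have hs : s ⬝ᵥ s = 1 := by norm_num [s, hij, hij.symm]
  have := autExt_dotProduct_self hφ0 hs
  rw [autExt_eq_vecMul hφ0 (mem_comp0_of_dotProduct_self_eq_one hs), add_vecMul, single_vecMul,
    single_vecMul] at this
  simp only [row_def, add_dotProduct, dotProduct_add, smul_dotProduct, dotProduct_smul, hrow,
    dotProduct_comm (autMatrix φ j), smul_eq_mul] at this
  linarith

theorem autMatrix_mul_transpose (hφ0 : autExt φ 0 = 0) : autMatrix φ * (autMatrix φ)ᵀ = 1 := by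
  ext i j
  change autMatrix φ i ⬝ᵥ autMatrix φ j = _
  rcases eq_or_ne i j with rfl | hij
  · rw [one_apply_eq]
    exact autExt_dotProduct_self hφ0 (by simp)
  · rw [one_apply_ne hij]
    exact autMatrix_row_dotProduct_of_ne hφ0 hij

end Automorphism

theorem stmt_16_general {n : ℕ}
    (φ : (euclGraph n).induce (comp0 n) ≃g (euclGraph n).induce (comp0 n))
    (h0 : (0 : Fin n → ℚ) ∈ comp0 n) (hφ0 : φ ⟨0, h0⟩ = ⟨0, h0⟩) :
    ∀ a b : comp0 n,
      ∑ i, ((φ a).1 i - (φ b).1 i) ^ 2 = ∑ i, (a.1 i - b.1 i) ^ 2 := by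
  intro a b
  have hf0 : autExt φ 0 = 0 := by rw [autExt_of_mem h0, hφ0]
  rw [sum_sub_sq_eq_dotProduct, sum_sub_sq_eq_dotProduct, ← autExt_coe, ← autExt_coe,
    autExt_eq_vecMul hf0 a.2, autExt_eq_vecMul hf0 b.2, ← sub_vecMul,
    vecMul_dotProduct_vecMul_of_mul_transpose_eq_one (autMatrix_mul_transpose hf0)]

/-- Rational Beckman–Quarles theorem: any automorphism of the connected component of
`0` in the unit-distance graph on `ℚⁿ` (`n ≥ 2`) fixing `0` preserves all distances. -/
theorem stmt_16 {n : ℕ} (hn : 2 ≤ n)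
    (φ : (euclGraph n).induce (comp0 n) ≃g (euclGraph n).induce (comp0 n))
    (h0 : (0 : Fin n → ℚ) ∈ comp0 n) (hφ0 : φ ⟨0, h0⟩ = ⟨0, h0⟩) :
    ∀ a b : comp0 n,
      ∑ i, ((φ a).1 i - (φ b).1 i) ^ 2 = ∑ i, (a.1 i - b.1 i) ^ 2 :=
  stmt_16_general φ h0 hφ0
end

section
/- The determinant of the quadratic form Sₖ(x) = Σ_{1≤i≤j≤k} xᵢxⱼ equals (k+1)/2ᵏ, which is congruent modulo rational squares to k+1 if k is even and to (k+1)/2 if k is odd. -/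
/-!
Twice the Gram matrix of `Sₖ` is `1 + J` with `J` the all-ones matrix, a rank-one perturbation of
the identity, so its determinant is `1 + k` and the Gram determinant is `(k + 1) / 2ᵏ`. Modulo
squares, `2ᵏ = (2^⌊k/2⌋)² · 2^(k mod 2)`.
-/

namespace Matrix

variable {n R : Type*} [DecidableEq n]

theorem det_one_add_of_const_one [Fintype n] [CommRing R] :
    det (1 + of fun _ _ : n => (1 : R)) = (Fintype.card n : R) + 1 := by
  have hJ : (of fun _ _ : n => (1 : R))
      = replicateCol Unit (fun _ : n => (1 : R)) * replicateRow Unit (fun _ : n => (1 : R)) := by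
    ext i j
    simp [mul_apply]
  rw [hJ, det_one_add_replicateCol_mul_replicateRow]
  simp [dotProduct, add_comm]

theorem of_ite_one_half_eq_smul [Field R] [NeZero (2 : R)] :
    (of fun i j : n => if i = j then (1 : R) else 1 / 2)
      = (2 : R)⁻¹ • (1 + of fun _ _ : n => (1 : R)) := by
  ext i j
  by_cases h : i = j
  · simp [h, one_add_one_eq_two, inv_mul_cancel₀ (two_ne_zero' R)]
  · simp [h]

theorem det_of_ite_one_half [Fintype n] [Field R] [NeZero (2 : R)] :
    (of fun i j : n => if i = j then (1 : R) else 1 / 2).det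
      = ((Fintype.card n : R) + 1) / 2 ^ Fintype.card n := by
  rw [of_ite_one_half_eq_smul, det_smul, det_one_add_of_const_one, inv_pow, inv_mul_eq_div]

end Matrix

theorem pow_eq_sq_mul_pow_mod_two {M : Type*} [Monoid M] (x : M) (k : ℕ) :
    x ^ k = (x ^ (k / 2)) ^ 2 * x ^ (k % 2) := by
  rw [← pow_mul, ← pow_add, Nat.div_add_mod']

/-- The determinant of the Gram matrix of `Sₖ` (with `1` on the diagonal and `1/2`
off the diagonal) equals `(k+1)/2ᵏ`, which is congruent modulo rational squares to
`k + 1` for even `k` and to `(k+1)/2` for odd `k`. -/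
theorem stmt_17 (k : ℕ) :
    (Matrix.of fun i j : Fin k => if i = j then (1 : ℚ) else 1 / 2).det
        = ((k : ℚ) + 1) / 2 ^ k ∧
      ∃ c : ℚ, c ≠ 0 ∧
        (Matrix.of fun i j : Fin k => if i = j then (1 : ℚ) else 1 / 2).det
          = c ^ 2 * (if Even k then (k : ℚ) + 1 else ((k : ℚ) + 1) / 2) := by
  have hdet := Matrix.det_of_ite_one_half (n := Fin k) (R := ℚ)
  rw [Fintype.card_fin] at hdet
  refine ⟨hdet, (2 ^ (k / 2))⁻¹, by positivity, ?_⟩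
  rw [hdet, pow_eq_sq_mul_pow_mod_two (2 : ℚ) k]
  rcases Nat.even_or_odd k with he | ho
  · rw [if_pos he, Nat.even_iff.mp he]
    field_simp
  · rw [if_neg (Nat.not_even_iff_odd.mpr ho), Nat.odd_iff.mp ho]
    field_simp
end
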